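/- For every real number φ with 0 < φ < 1, the ratio R_{n,φ} := B_{n,φ}/A_{n,φ} converges to 2 as n → ∞. -/

import Mathlib

/-!
Writing `P m = ∑_{d=1}^m φ^d`, adding the index `n + 1` to the double sum adds a row and a column,
each equal to `P n`, so `n² B_n = ∑_{m<n} 2 P m`. Since `P m → φ/(1-φ) ≠ 0`, Cesàro gives
`n B_n → 2φ/(1-φ)`, while `n A_n = P n → φ/(1-φ)`.
-/

open Finset Filter Topology

section OffDiagonal

variable {M : Type*} [AddCommMonoid M]

/-- `offDiagDistSum (φ ^ ·) n = n² B_{n,φ}`. -/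
def offDiagDistSum (f : ℕ → M) (n : ℕ) : M :=
  ∑ i ∈ Icc 1 n, ∑ j ∈ (Icc 1 n).erase i, f ((i : ℤ) - j).natAbs

lemma sum_Icc_one_reflect (f : ℕ → M) (n : ℕ) :
    ∑ j ∈ Icc 1 n, f (n + 1 - j) = ∑ d ∈ Icc 1 n, f d :=
  sum_nbij' (fun j => n + 1 - j) (fun d => n + 1 - d) (by simp; omega) (by simp; omega)
    (by simp; omega) (by simp; omega) (fun _ _ => rfl)

lemma offDiagDistSum_succ (f : ℕ → M) (n : ℕ) :
    offDiagDistSum f (n + 1) = offDiagDistSum f n + 2 • ∑ d ∈ Icc 1 n, f d := by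
  have hnew : n + 1 ∉ Icc 1 n := by simp
  have hrow : ∑ j ∈ Icc 1 n, f (((n + 1 : ℕ) : ℤ) - j).natAbs = ∑ d ∈ Icc 1 n, f d := by
    rw [← sum_Icc_one_reflect]
    refine sum_congr rfl fun j hj => congrArg f ?_
    simp only [mem_Icc] at hj
    omega
  have hcol : ∀ i ∈ Icc 1 n,
      ∑ j ∈ (insert (n + 1) (Icc 1 n)).erase i, f ((i : ℤ) - j).natAbs
        = f (n + 1 - i) + ∑ j ∈ (Icc 1 n).erase i, f ((i : ℤ) - j).natAbs := by
    intro i hi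
    simp only [mem_Icc] at hi
    rw [erase_insert_of_ne (by omega), sum_insert (fun h => hnew (mem_of_mem_erase h))]
    congr 2
    omega
  rw [offDiagDistSum, ← insert_Icc_right_eq_Icc_add_one (by omega), sum_insert hnew,
    erase_insert hnew, sum_congr rfl hcol, sum_add_distrib, hrow, sum_Icc_one_reflect,
    offDiagDistSum, two_nsmul]
  abel

lemma offDiagDistSum_eq_sum_range (f : ℕ → M) (n : ℕ) :
    offDiagDistSum f n = ∑ m ∈ range n, 2 • ∑ d ∈ Icc 1 m, f d := by
  induction n with
  | zero => simp [offDiagDistSum]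
  | succ n ih => rw [offDiagDistSum_succ, ih, sum_range_succ]

end OffDiagonal

lemma tendsto_sum_Icc_one_geometric {φ : ℝ} (hφ : |φ| < 1) :
    Tendsto (fun n : ℕ => ∑ d ∈ Icc 1 n, φ ^ d) atTop (𝓝 (φ * (1 - φ)⁻¹)) := by
  have hsum (n : ℕ) : ∑ d ∈ Icc 1 n, φ ^ d = φ * ∑ d ∈ range n, φ ^ d := by
    rw [← Ico_add_one_right_eq_Icc, sum_Ico_eq_sum_range, mul_sum]
    simp [pow_add]
  simpa only [hsum] using (hasSum_geometric_of_abs_lt_one hφ).tendsto_sum_nat.const_mul φ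

lemma tendsto_offDiagDistSum_div {f : ℕ → ℝ} {L : ℝ}
    (hf : Tendsto (fun n : ℕ => ∑ d ∈ Icc 1 n, f d) atTop (𝓝 L)) :
    Tendsto (fun n : ℕ => offDiagDistSum f n / n) atTop (𝓝 (2 * L)) := by
  simpa only [offDiagDistSum_eq_sum_range, nsmul_eq_mul, Nat.cast_ofNat, div_eq_inv_mul] using
    (hf.const_mul 2).cesaro

/-- For `0 < φ < 1`, the ratio `R_{n,φ} = B_{n,φ}/A_{n,φ}` converges to `2` as `n → ∞`. -/
theorem R_tendsto_two (φ : ℝ) (hφ0 : 0 < φ) (hφ1 : φ < 1) :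
    Tendsto
      (fun n : ℕ =>
        ((1 / (n : ℝ) ^ 2) *
            ∑ i ∈ Finset.Icc 1 n, ∑ j ∈ (Finset.Icc 1 n).erase i,
              φ ^ (((i : ℤ) - (j : ℤ)).natAbs)) /
          ((1 / (n : ℝ)) * ∑ k ∈ Finset.Icc 1 n, φ ^ k))
      atTop (nhds 2) := by
  have hA := tendsto_sum_Icc_one_geometric (abs_lt.2 ⟨by linarith, hφ1⟩)
  have hL : φ * (1 - φ)⁻¹ ≠ 0 := mul_ne_zero hφ0.ne' (inv_ne_zero (sub_ne_zero.2 hφ1.ne'))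
  have hR := (tendsto_offDiagDistSum_div hA).div hA hL
  rw [mul_div_cancel_right₀ _ hL] at hR
  refine hR.congr' ((eventually_ne_atTop 0).mono fun n hn => ?_)
  have hn : (n : ℝ) ≠ 0 := Nat.cast_ne_zero.2 hn
  simp only [Pi.div_apply, offDiagDistSum]
  field_simp
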